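/- arXiv:1506.00905 — 2 statements merged into one kernel-verified Lean document; each statement's English description precedes it below -/
import Mathlib

section
/- Let G be a group with a left-invariant metric d ≤ 1 satisfying the uniform continuity condition for multiplication (for every ε > 0 there is δ > 0 such that d(x₁,x₂) < δ implies d(y·x₁·z, y·x₂·z) < ε for all y,z). Then the bi-invariant metric d*(x,y) := sup_{u,v} d(u·x·v, u·y·v) is uniformly equivalent to d: every open d-ball contains an open d*-ball around the same center and vice versa; in particular d and d* induce the same topology on G. -/
theorem le_sSup_dist_mul_mul {G : Type*} [MulOneClass G] {d : G → G → ℝ} {C : ℝ}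
    (hC : ∀ x y, d x y ≤ C) (x y : G) :
    d x y ≤ sSup {r : ℝ | ∃ u v : G, r = d (u * x * v) (u * y * v)} :=
  le_csSup ⟨C, fun _ ⟨_, _, hr⟩ => hr ▸ hC _ _⟩ ⟨1, 1, by simp only [one_mul, mul_one]⟩

theorem sSup_dist_mul_mul_le {G : Type*} [Mul G] {d : G → G → ℝ} {x y : G} {c : ℝ}
    (h : ∀ u v, d (u * x * v) (u * y * v) ≤ c) :
    sSup {r : ℝ | ∃ u v : G, r = d (u * x * v) (u * y * v)} ≤ c :=
  csSup_le ⟨_, x, x, rfl⟩ fun _ ⟨u, v, hr⟩ => hr ▸ h u v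

theorem dstar_uniformly_equivalent_general {G : Type*} [Group G] (d : G → G → ℝ)
    (hd_le_one : ∀ x y, d x y ≤ 1)
    (huc : ∀ ε > (0 : ℝ), ∃ δ > (0 : ℝ), ∀ x₁ x₂ y z : G,
      d x₁ x₂ < δ → d (y * x₁ * z) (y * x₂ * z) < ε)
    (dstar : G → G → ℝ)
    (hdstar : ∀ x y, dstar x y = sSup {r : ℝ | ∃ u v : G, r = d (u * x * v) (u * y * v)}) :
    (∀ ε > (0 : ℝ), ∃ δ > (0 : ℝ), ∀ x y, d x y < δ → dstar x y < ε) ∧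
    (∀ ε > (0 : ℝ), ∃ δ > (0 : ℝ), ∀ x y, dstar x y < δ → d x y < ε) := by
  constructor
  · intro ε hε
    -- take the modulus for `ε / 2`, since the supremum only inherits a non-strict bound
    obtain ⟨δ, hδ, hmod⟩ := huc (ε / 2) (half_pos hε)
    refine ⟨δ, hδ, fun x y hxy => ?_⟩
    rw [hdstar]
    exact (sSup_dist_mul_mul_le fun u v => (hmod x y u v hxy).le).trans_lt (half_lt_self hε)
  · intro ε hε
    refine ⟨ε, hε, fun x y hxy => ?_⟩
    rw [hdstar] at hxy
    exact (le_sSup_dist_mul_mul hd_le_one x y).trans_lt hxy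

/-- Under the hypotheses of Lemma 1, the bi-invariant metric
`d* x y = sup_{u,v} d (u*x*v) (u*y*v)` is uniformly equivalent to `d`:
every open `d`-ball contains an open `d*`-ball around the same center and
vice versa. -/
theorem dstar_uniformly_equivalent {G : Type*} [Group G] (d : G → G → ℝ)
    (hd_self : ∀ x, d x x = 0)
    (hd_eq : ∀ x y, d x y = 0 → x = y)
    (hd_symm : ∀ x y, d x y = d y x)
    (hd_tri : ∀ x y z, d x z ≤ d x y + d y z)
    (hd_le_one : ∀ x y, d x y ≤ 1)
    (hd_left : ∀ g x y, d (g * x) (g * y) = d x y)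
    (huc : ∀ ε > (0 : ℝ), ∃ δ > (0 : ℝ), ∀ x₁ x₂ y z : G,
      d x₁ x₂ < δ → d (y * x₁ * z) (y * x₂ * z) < ε)
    (dstar : G → G → ℝ)
    (hdstar : ∀ x y, dstar x y = sSup {r : ℝ | ∃ u v : G, r = d (u * x * v) (u * y * v)}) :
    (∀ ε > (0 : ℝ), ∃ δ > (0 : ℝ), ∀ x y, d x y < δ → dstar x y < ε) ∧
    (∀ ε > (0 : ℝ), ∃ δ > (0 : ℝ), ∀ x y, dstar x y < δ → d x y < ε) :=
  dstar_uniformly_equivalent_general d hd_le_one huc dstar hdstar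
end

section
/- Let G be a group with left-invariant metric d, H a compact subgroup of G that is invariant under every element of a group A of isometric automorphisms of G, and suppose A acts oligomorphically on the coset space G/H (finitely many orbits on (G/H)ⁿ for each n). Then the action of A on (G, d) is approximately oligomorphic: for every n ≥ 1 and ε > 0 there is a finite set F ⊆ Gⁿ such that A·F is ε-dense in (Gⁿ, max-metric). -/
/-!
Every coset of `H` is a translate of the compact set `H`, so a finite `ε`-net of `Hⁿ`
multiplied by representatives of the finitely many `A`-orbits on `(G ⧸ H)ⁿ` gives a finite
set whose `A`-translates are `ε`-dense in `Gⁿ`: an automorphism carries `f * c` to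
`φ f * φ c`, and left invariance together with `φ` being an isometry reduce the distance to
`x` to the distance from `c` to a point of `Hⁿ`.
-/

open Pointwise

lemma IsCompact.exists_finset_dist_lt {X : Type*} [PseudoMetricSpace X] {K : Set X}
    (hK : IsCompact K) {ε : ℝ} (hε : 0 < ε) : ∃ t : Finset X, ∀ x ∈ K, ∃ c ∈ t, dist x c < ε := by
  obtain ⟨t, -, hKt⟩ := hK.elim_nhds_subcover _ fun x _ => Metric.ball_mem_nhds x hε
  refine ⟨t, fun x hx => ?_⟩
  obtain ⟨c, hc, hxc⟩ := Set.mem_iUnion₂.mp (hKt hx)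
  exact ⟨c, hc, hxc⟩

lemma dist_map_mul_eq_dist_inv_map {G : Type*} [Group G] [PseudoMetricSpace G]
    (hleft : ∀ g x y : G, dist (g * x) (g * y) = dist x y) {φ : MulAut G} (hφ : Isometry φ)
    (f c x : G) : dist (φ (f * c)) x = dist c (φ⁻¹ ((φ f)⁻¹ * x)) := by
  calc dist (φ (f * c)) x = dist (φ f * φ c) (φ f * ((φ f)⁻¹ * x)) := by
        rw [map_mul, mul_inv_cancel_left]
    _ = dist (φ c) (φ (φ⁻¹ ((φ f)⁻¹ * x))) := by rw [hleft, MulAut.apply_inv_self]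
    _ = dist c (φ⁻¹ ((φ f)⁻¹ * x)) := hφ.dist_eq _ _

/-- If `A` is a group of isometric automorphisms of `(G,d)`
leaving a compact subgroup `H` invariant and acting oligomorphically on the
coset space `G ⧸ H`, then the action of `A` on `(G,d)` is approximately
oligomorphic. -/
theorem approximately_oligomorphic_of_oligomorphic_on_quotient
    {G : Type*} [Group G] [MetricSpace G]
    (hleft : ∀ g x y : G, dist (g * x) (g * y) = dist x y)
    (A : Subgroup (MulAut G))
    (hAiso : ∀ φ ∈ A, Isometry (φ : G → G))
    (H : Subgroup G)
    (hHcompact : IsCompact (H : Set G))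
    (hHinv : ∀ φ ∈ A, ∀ h ∈ H, φ h ∈ H)
    (holig : ∀ n : ℕ, ∃ F : Finset (Fin n → G),
      ∀ x : Fin n → G, ∃ f ∈ F, ∃ φ ∈ A,
        ∀ i, ((φ (f i) : G) : G ⧸ H) = ((x i : G) : G ⧸ H)) :
    ∀ n : ℕ, ∀ ε > (0 : ℝ), ∃ F : Finset (Fin n → G),
      ∀ x : Fin n → G, ∃ f ∈ F, ∃ φ ∈ A,
        ∀ i, dist (φ (f i)) (x i) < ε := by
  classical
  intro n ε hε
  obtain ⟨F, hF⟩ := holig n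
  obtain ⟨T, hT⟩ := (isCompact_univ_pi fun _ : Fin n => hHcompact).exists_finset_dist_lt hε
  refine ⟨F * T, fun x => ?_⟩
  obtain ⟨f, hf, φ, hφ, hfx⟩ := hF x
  have hH (i : Fin n) : φ⁻¹ ((φ (f i))⁻¹ * x i) ∈ H :=
    hHinv _ (A.inv_mem hφ) _ (QuotientGroup.eq.mp (hfx i))
  obtain ⟨c, hc, hxc⟩ := hT (fun i => φ⁻¹ ((φ (f i))⁻¹ * x i)) fun i _ => hH i
  refine ⟨f * c, Finset.mul_mem_mul hf hc, φ, hφ, fun i => ?_⟩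
  rw [Pi.mul_apply, dist_map_mul_eq_dist_inv_map hleft (hAiso φ hφ), dist_comm]
  exact (dist_pi_lt_iff hε).mp hxc i
end
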